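/- arXiv:2103.07717 — 5 statements merged into one kernel-verified Lean document; each statement's English description precedes it below -/
import Mathlib

section
/- Let b : ℕ → ℝ satisfy |b(j)| ≤ C(1+ε)^{-j} for some C > 0 and ε > 0, and let a(j) = ∑_{s=0}^{j} ω_{-d,λ}(s) b(j−s) with λ > 0 and d ∈ ℝ − ℤ_{<0}. Then for every ν ∈ [1,2), ∑_{j=0}^∞ |a(j)|^ν < ∞. -/
/-!
The ratio of consecutive coefficients is `ω(s+1)/ω(s) = (s+d)/(s+1) · e^{-λ} → e^{-λ} < 1`,
so `ω` is absolutely summable by the ratio test, and `b` is dominated by a geometric series.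
The convolution of two `ℓ¹` sequences is in `ℓ¹` (Cauchy product), and `ℓ¹ ⊆ ℓ^ν` for `ν ≥ 1`.
-/

open Filter Real Finset

/-- Tempered fractional coefficient ω_{-d,λ}(j) = Γ(j+d)/(Γ(d)Γ(j+1)) e^{-λj}. -/
noncomputable def omegaCoeff (d lam : ℝ) (j : ℕ) : ℝ :=
  Real.Gamma (j + d) / (Real.Gamma d * Real.Gamma (j + 1)) * Real.exp (-lam * j)

open Topology

theorem omegaCoeff_succ (d lam : ℝ) (s : ℕ) :
    omegaCoeff d lam (s + 1) = omegaCoeff d lam s * ((s + d) / (s + 1) * exp (-lam)) := by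
  -- At the poles `d ∈ -ℕ` both sides vanish: `Gamma d = 0` and division by zero gives `0`.
  by_cases hΓ : Gamma d = 0
  · simp [omegaCoeff, hΓ]
  have hsd : (s : ℝ) + d ≠ 0 := fun h => hΓ ((Gamma_eq_zero_iff d).2 ⟨s, by linarith⟩)
  have hexp : exp (-lam * (s + 1 : ℕ)) = exp (-lam * s) * exp (-lam) := by
    rw [← exp_add]; push_cast; ring_nf
  simp only [omegaCoeff, hexp]
  push_cast
  rw [add_right_comm, Gamma_add_one hsd, Gamma_add_one (by positivity)]
  field_simp

theorem tendsto_natCast_add_div_natCast_add_one (d : ℝ) :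
    Tendsto (fun s : ℕ => ((s : ℝ) + d) / (s + 1)) atTop (𝓝 1) := by
  have h := (tendsto_one_div_add_atTop_nhds_zero_nat.const_mul (d - 1)).const_add 1
  rw [mul_zero, add_zero] at h
  refine h.congr fun s => ?_
  field_simp
  ring

theorem summable_omegaCoeff (d : ℝ) {lam : ℝ} (hlam : 0 < lam) :
    Summable (omegaCoeff d lam) := by
  have hq : exp (-lam) < 1 := exp_lt_one_iff.2 (by linarith)
  obtain ⟨r, hqr, hr⟩ := exists_between hq
  have hratio : Tendsto (fun s : ℕ => |((s : ℝ) + d) / (s + 1)| * exp (-lam)) atTop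
      (𝓝 (exp (-lam))) := by
    simpa using ((tendsto_natCast_add_div_natCast_add_one d).abs).mul_const (exp (-lam))
  refine summable_of_ratio_norm_eventually_le hr ?_
  filter_upwards [hratio.eventually (ge_mem_nhds hqr)] with s hs
  rw [omegaCoeff_succ, norm_mul, Real.norm_eq_abs (_ * _), abs_mul, abs_of_pos (exp_pos _),
    mul_comm]
  exact mul_le_mul_of_nonneg_right hs (norm_nonneg _)

theorem Summable.abs_rpow_of_one_le {ι : Type*} {f : ι → ℝ} (hf : Summable f) {p : ℝ}
    (hp : 1 ≤ p) : Summable fun i => |f i| ^ p := by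
  have h1 : Memℓp f 1 := memℓp_gen (by simpa using hf.abs)
  have hp' : Memℓp f (ENNReal.ofReal p) := h1.of_exponent_ge (by simpa using hp)
  have hpr : (ENNReal.ofReal p).toReal = p := ENNReal.toReal_ofReal (by linarith)
  simpa [hpr] using hp'.summable (by rw [hpr]; linarith)

theorem ma_coeff_summable_rpow_general (b : ℕ → ℝ) (C ε lam d : ℝ)
    (hε : 0 < ε)
    (hb : ∀ j : ℕ, |b j| ≤ C * (1 + ε) ^ (-(j : ℝ)))
    (hlam : 0 < lam)
    (ν : ℝ) (hν1 : 1 ≤ ν) :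
    Summable (fun j : ℕ =>
      |∑ s ∈ Finset.range (j + 1), omegaCoeff d lam s * b (j - s)| ^ ν) := by
  have hgeom : Summable fun j : ℕ => C * (1 + ε)⁻¹ ^ j :=
    (summable_geometric_of_lt_one (by positivity)
      (inv_lt_one_of_one_lt₀ (by linarith))).mul_left C
  have hb_sum : Summable fun j => ‖b j‖ :=
    hgeom.of_nonneg_of_le (fun _ => norm_nonneg _) fun j => by
      simpa [rpow_neg, inv_pow] using hb j
  have hconv :=
    summable_norm_sum_mul_range_of_summable_norm (summable_omegaCoeff d hlam).norm hb_sum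
  simpa using hconv.abs_rpow_of_one_le hν1

theorem ma_coeff_summable_rpow (b : ℕ → ℝ) (C ε lam d : ℝ)
    (hC : 0 < C) (hε : 0 < ε)
    (hb : ∀ j : ℕ, |b j| ≤ C * (1 + ε) ^ (-(j : ℝ)))
    (hlam : 0 < lam) (hd : ∀ n : ℕ, d ≠ -((n : ℝ) + 1))
    (ν : ℝ) (hν1 : 1 ≤ ν) (hν2 : ν < 2) :
    Summable (fun j : ℕ =>
      |∑ s ∈ Finset.range (j + 1), omegaCoeff d lam s * b (j - s)| ^ ν) :=
  ma_coeff_summable_rpow_general b C ε lam d hε hb hlam ν hν1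
end

section
/- Let 0 < α < 1, λ > 0, and d ∈ ℝ − ℤ_{<0}. With w(j) = j^{d-1} e^{-λj} for j ≥ 1, one has lim_{n→∞} e^{λαn} n^{-α(d-1)} ∑_{j=0}^∞ w(j+n)^α = 1/(1 − e^{-λα}). -/
open Filter Real

/-- Asymptotic tempered kernel w(j) = j^{d-1} e^{-λj}. -/
noncomputable def temperedKernel (d lam : ℝ) (j : ℕ) : ℝ :=
  (j : ℝ) ^ (d - 1) * Real.exp (-lam * j)

/-!
Writing `r = e^{-λα}` and `β = α(d-1)`, the `n`-th term of the sequence is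
`∑ⱼ ((j + n)/n)^β rʲ`. Each summand tends to `rʲ`, and for `n ≥ 1` it is dominated by
`(j + 1)^⌈|β|⌉ rʲ`, which is summable; dominated convergence gives the limit `∑ⱼ rʲ = 1/(1 - r)`.
-/

open Topology

lemma summable_add_one_pow_mul_geometric (k : ℕ) {r : ℝ} (hr0 : 0 ≤ r) (hr1 : r < 1) :
    Summable fun j : ℕ => ((j : ℝ) + 1) ^ k * r ^ j := by
  have hsum : Summable fun j : ℕ => 2 ^ (k - 1) * ((j : ℝ) ^ k * r ^ j + r ^ j) :=
    ((summable_pow_mul_geometric_of_norm_lt_one k (by rwa [norm_of_nonneg hr0])).add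
      (summable_geometric_of_lt_one hr0 hr1)).mul_left _
  refine hsum.of_nonneg_of_le (fun j => by positivity) fun j => ?_
  calc ((j : ℝ) + 1) ^ k * r ^ j ≤ 2 ^ (k - 1) * ((j : ℝ) ^ k + 1 ^ k) * r ^ j := by
        gcongr; exact add_pow_le (Nat.cast_nonneg j) zero_le_one k
    _ = 2 ^ (k - 1) * ((j : ℝ) ^ k * r ^ j + r ^ j) := by ring

lemma rpow_le_pow_natCeil_abs {x y : ℝ} (β : ℝ) (hx : 1 ≤ x) (hxy : x ≤ y) :
    x ^ β ≤ y ^ ⌈|β|⌉₊ :=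
  calc x ^ β ≤ x ^ (⌈|β|⌉₊ : ℝ) :=
        rpow_le_rpow_of_exponent_le hx ((le_abs_self β).trans (Nat.le_ceil _))
    _ = x ^ ⌈|β|⌉₊ := rpow_natCast x _
    _ ≤ y ^ ⌈|β|⌉₊ := pow_le_pow_left₀ (zero_le_one.trans hx) hxy _

lemma tendsto_add_div_natCast (x : ℝ) :
    Tendsto (fun n : ℕ => (x + n) / n) atTop (𝓝 1) := by
  simpa [add_comm x] using (tendsto_natCast_div_add_atTop x).inv₀ one_ne_zero

lemma tendsto_tsum_add_div_rpow_mul_geometric (β : ℝ) {r : ℝ} (hr0 : 0 ≤ r) (hr1 : r < 1) :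
    Tendsto (fun n : ℕ => ∑' j : ℕ, (((j : ℝ) + n) / n) ^ β * r ^ j) atTop (𝓝 (1 - r)⁻¹) := by
  rw [← tsum_geometric_of_lt_one hr0 hr1]
  refine tendsto_tsum_of_dominated_convergence
    (summable_add_one_pow_mul_geometric ⌈|β|⌉₊ hr0 hr1) (fun j => ?_) ?_
  · simpa using ((tendsto_add_div_natCast j).rpow_const (Or.inl one_ne_zero)).mul_const (r ^ j)
  · filter_upwards [eventually_gt_atTop 0] with n hn j
    have hn' : (0 : ℝ) < n := Nat.cast_pos.2 hn
    have h1 : 1 ≤ ((j : ℝ) + n) / n := by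
      rw [le_div_iff₀ hn']; linarith [(Nat.cast_nonneg j : (0 : ℝ) ≤ j)]
    have h2 : ((j : ℝ) + n) / n ≤ j + 1 := by
      rw [div_le_iff₀ hn']
      nlinarith [(Nat.cast_nonneg j : (0 : ℝ) ≤ j), (Nat.one_le_cast (α := ℝ)).2 hn]
    rw [norm_of_nonneg (by positivity)]
    gcongr
    exact rpow_le_pow_natCeil_abs β h1 h2

lemma temperedKernel_rpow (d lam α : ℝ) (j : ℕ) :
    temperedKernel d lam j ^ α = (j : ℝ) ^ (α * (d - 1)) * exp (-lam * α) ^ j := by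
  rw [temperedKernel, mul_rpow (by positivity) (exp_pos _).le, ← rpow_mul (Nat.cast_nonneg j),
    ← exp_mul, ← exp_nat_mul]
  ring_nf

lemma exp_mul_rpow_neg_mul_temperedKernel_rpow (d lam α : ℝ) {n : ℕ} (hn : 0 < n) (j : ℕ) :
    exp (lam * α * n) * (n : ℝ) ^ (-(α * (d - 1))) * temperedKernel d lam (j + n) ^ α =
      (((j : ℝ) + n) / n) ^ (α * (d - 1)) * exp (-lam * α) ^ j := by
  have hn' : (0 : ℝ) < n := Nat.cast_pos.2 hn
  have hexp : exp (lam * α * n) * exp (-lam * α) ^ (j + n) = exp (-lam * α) ^ j := by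
    rw [← exp_nat_mul, ← exp_nat_mul, ← exp_add]; push_cast; ring_nf
  rw [temperedKernel_rpow, div_rpow (by positivity) hn'.le, rpow_neg hn'.le, ← hexp]
  push_cast
  field_simp

theorem tail_sum_asymptotics_general (α lam d : ℝ) (hα0 : 0 < α) (hlam : 0 < lam) :
    Tendsto (fun n : ℕ =>
        Real.exp (lam * α * n) * (n : ℝ) ^ (-(α * (d - 1))) *
          ∑' j : ℕ, (temperedKernel d lam (j + n)) ^ α)
      atTop (nhds (1 / (1 - Real.exp (-lam * α)))) := by
  have hr1 : exp (-lam * α) < 1 := exp_lt_one_iff.2 (by nlinarith)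
  rw [one_div]
  refine (tendsto_tsum_add_div_rpow_mul_geometric (α * (d - 1)) (exp_pos _).le hr1).congr' ?_
  filter_upwards [eventually_gt_atTop 0] with n hn
  rw [← tsum_mul_left]
  exact tsum_congr fun j => (exp_mul_rpow_neg_mul_temperedKernel_rpow d lam α hn j).symm

theorem tail_sum_asymptotics (α lam d : ℝ) (hα0 : 0 < α) (hα1 : α < 1)
    (hlam : 0 < lam) (hd : ∀ n : ℕ, d ≠ -((n : ℝ) + 1)) :
    Tendsto (fun n : ℕ =>
        Real.exp (lam * α * n) * (n : ℝ) ^ (-(α * (d - 1))) *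
          ∑' j : ℕ, (temperedKernel d lam (j + n)) ^ α)
      atTop (nhds (1 / (1 - Real.exp (-lam * α)))) :=
  tail_sum_asymptotics_general α lam d hα0 hlam
end

section
/- Let 1 < α ≤ 2, λ > 0, d ∈ ℝ − ℤ_{<0}, and w(j) = j^{d-1} e^{-λj} for j ≥ 1. Then lim_{n→∞} e^{λn} n^{-(d-1)} ∑_{j=1}^∞ w(j+n)^α = 0. -/
open Filter Real

theorem tail_sum_tendsto_zero_alpha_gt_one (α lam d : ℝ)
    (hα1 : 1 < α) (hα2 : α ≤ 2) (hlam : 0 < lam)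
    (hd : ∀ n : ℕ, d ≠ -((n : ℝ) + 1)) :
    Tendsto (fun n : ℕ =>
        Real.exp (lam * n) * (n : ℝ) ^ (-(d - 1)) *
          ∑' j : ℕ, (temperedKernel d lam (j + 1 + n)) ^ α)
      atTop (nhds 0) := by
  have hα0 : (0:ℝ) < α := lt_trans one_pos hα1
  set c : ℝ := lam * α with hc
  have hc0 : 0 < c := mul_pos hlam hα0
  have hlamc : lam < c := by
    have := (mul_lt_mul_iff_right₀ hlam).2 hα1
    simpa [hc] using this
  set β : ℝ := α * (d - 1) with hβ
  set γ : ℝ := max β 0 with hγ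
  set k : ℕ := ⌈γ⌉₊ with hk
  set b : ℝ := c - lam with hb
  have hb0 : 0 < b := sub_pos.mpr hlamc
  set s : ℝ := β - (d - 1) with hs
  -- summable majorant
  set g : ℕ → ℝ := fun j => 2 ^ k * ((j : ℝ) + 1) ^ k * Real.exp (-c * ((j : ℝ) + 1)) with hg
  have hr : ‖Real.exp (-c)‖ < 1 := by
    rw [Real.norm_eq_abs, abs_of_pos (Real.exp_pos _)]
    exact Real.exp_lt_one_iff.mpr (neg_neg_iff_pos.mpr hc0)
  have hgs : Summable g := by
    have h1 : Summable (fun n : ℕ => (n : ℝ) ^ k * Real.exp (-c) ^ n) :=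
      summable_pow_mul_geometric_of_norm_lt_one k hr
    have h2 : Summable (fun j : ℕ => ((j : ℝ) + 1) ^ k * Real.exp (-c) ^ (j + 1)) := by
      have := (summable_nat_add_iff 1).mpr h1
      simpa [Nat.cast_add] using this
    have h3 := h2.mul_left ((2:ℝ) ^ k)
    refine h3.congr fun j => ?_
    have he : Real.exp (-c * ((j : ℝ) + 1)) = Real.exp (-c) ^ (j + 1) := by
      rw [Real.exp_mul, ← Real.rpow_natCast (Real.exp (-c)) (j + 1)]
      congr 1
      push_cast
      ring
    rw [hg]
    simp only [he]
    ring
  have hgnn : ∀ j, 0 ≤ g j := fun j =>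
    mul_nonneg (mul_nonneg (by positivity) (by positivity)) (Real.exp_pos _).le
  -- the summand is nonneg
  have hfnn : ∀ n j : ℕ, 0 ≤ (temperedKernel d lam (j + 1 + n)) ^ α := fun n j =>
    Real.rpow_nonneg
      (mul_nonneg (Real.rpow_nonneg (Nat.cast_nonneg _) _) (Real.exp_pos _).le) _
  -- pointwise bound for n ≥ 1
  have key : ∀ n : ℕ, 1 ≤ n → ∀ j : ℕ,
      (temperedKernel d lam (j + 1 + n)) ^ α
        ≤ ((n : ℝ) ^ β * Real.exp (-c * n)) * g j := by
    intro n hn j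
    have hn1 : (1:ℝ) ≤ (n:ℝ) := by exact_mod_cast hn
    have hn0 : (0:ℝ) < (n:ℝ) := lt_of_lt_of_le one_pos hn1
    have hj0 : (0:ℝ) ≤ (j:ℝ) := Nat.cast_nonneg _
    set m : ℝ := (j : ℝ) + 1 + (n : ℝ) with hm
    have hm1 : (1:ℝ) ≤ m := by rw [hm]; nlinarith
    have hm0 : (0:ℝ) < m := lt_of_lt_of_le one_pos hm1
    have hcast : ((j + 1 + n : ℕ) : ℝ) = m := by rw [hm]; push_cast; ring
    have hEq : (temperedKernel d lam (j + 1 + n)) ^ α = m ^ β * Real.exp (-c * m) := by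
      rw [temperedKernel, hcast,
        Real.mul_rpow (Real.rpow_nonneg hm0.le _) (Real.exp_pos _).le,
        ← Real.rpow_mul hm0.le, ← Real.exp_mul]
      rw [hβ, hc]
      congr 1
      · congr 1; ring
      · congr 1; ring
    have hmβ : m ^ β ≤ (n:ℝ) ^ β * (2 * ((j:ℝ) + 1)) ^ γ := by
      rcases le_or_gt β 0 with hβ0 | hβ0
      · have hγ0 : γ = 0 := max_eq_right hβ0
        rw [hγ0, Real.rpow_zero, mul_one]
        exact Real.rpow_le_rpow_of_nonpos hn0 (by rw [hm]; nlinarith) hβ0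
      · have hγβ : γ = β := max_eq_left hβ0.le
        have hle : m ≤ 2 * ((j:ℝ) + 1) * (n:ℝ) := by rw [hm]; nlinarith
        calc m ^ β ≤ (2 * ((j:ℝ) + 1) * (n:ℝ)) ^ β :=
              Real.rpow_le_rpow hm0.le hle hβ0.le
          _ = (2 * ((j:ℝ) + 1)) ^ β * (n:ℝ) ^ β :=
              Real.mul_rpow (by positivity) hn0.le
          _ = (n:ℝ) ^ β * (2 * ((j:ℝ) + 1)) ^ γ := by rw [hγβ]; ring
    have h2k : (2 * ((j:ℝ) + 1)) ^ γ ≤ 2 ^ k * ((j:ℝ) + 1) ^ k := by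
      have h1 : (1:ℝ) ≤ 2 * ((j:ℝ) + 1) := by nlinarith
      calc (2 * ((j:ℝ) + 1)) ^ γ ≤ (2 * ((j:ℝ) + 1)) ^ (k:ℝ) :=
            Real.rpow_le_rpow_of_exponent_le h1 (Nat.le_ceil γ)
        _ = (2 * ((j:ℝ) + 1)) ^ k := Real.rpow_natCast _ _
        _ = 2 ^ k * ((j:ℝ) + 1) ^ k := mul_pow _ _ _
    have hexp : Real.exp (-c * m) = Real.exp (-c * ((j:ℝ) + 1)) * Real.exp (-c * (n:ℝ)) := by
      rw [← Real.exp_add]; congr 1; rw [hm]; ring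
    calc (temperedKernel d lam (j + 1 + n)) ^ α = m ^ β * Real.exp (-c * m) := hEq
      _ ≤ ((n:ℝ) ^ β * (2 ^ k * ((j:ℝ) + 1) ^ k)) * Real.exp (-c * m) := by
          have h := hmβ.trans
            (mul_le_mul_of_nonneg_left h2k (Real.rpow_nonneg hn0.le β))
          exact mul_le_mul_of_nonneg_right h (Real.exp_pos _).le
      _ = ((n:ℝ) ^ β * Real.exp (-c * n)) * g j := by
          rw [hexp, hg]; ring
  -- total bound for n ≥ 1
  set S : ℝ := ∑' j, g j with hS
  have hbound : ∀ n : ℕ, 1 ≤ n →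
      Real.exp (lam * n) * (n : ℝ) ^ (-(d - 1)) *
          (∑' j : ℕ, (temperedKernel d lam (j + 1 + n)) ^ α)
        ≤ S * ((n:ℝ) ^ s * Real.exp (-b * (n:ℝ))) := by
    intro n hn
    have hn1 : (1:ℝ) ≤ (n:ℝ) := by exact_mod_cast hn
    have hn0 : (0:ℝ) < (n:ℝ) := lt_of_lt_of_le one_pos hn1
    have hmaj : Summable (fun j => ((n:ℝ) ^ β * Real.exp (-c * n)) * g j) :=
      hgs.mul_left _
    have hf : Summable (fun j : ℕ => (temperedKernel d lam (j + 1 + n)) ^ α) :=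
      Summable.of_nonneg_of_le (hfnn n) (key n hn) hmaj
    have ht : (∑' j : ℕ, (temperedKernel d lam (j + 1 + n)) ^ α)
        ≤ ((n:ℝ) ^ β * Real.exp (-c * n)) * S := by
      calc (∑' j : ℕ, (temperedKernel d lam (j + 1 + n)) ^ α)
          ≤ ∑' j, ((n:ℝ) ^ β * Real.exp (-c * n)) * g j := Summable.tsum_le_tsum (key n hn) hf hmaj
        _ = ((n:ℝ) ^ β * Real.exp (-c * n)) * S := by rw [tsum_mul_left]
    have hpos : 0 ≤ Real.exp (lam * n) * (n : ℝ) ^ (-(d - 1)) :=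
      mul_nonneg (Real.exp_pos _).le (Real.rpow_nonneg hn0.le _)
    have h2 := mul_le_mul_of_nonneg_left ht hpos
    refine h2.trans_eq ?_
    have e1 : (n:ℝ) ^ (-(d - 1)) * (n:ℝ) ^ β = (n:ℝ) ^ s := by
      rw [← Real.rpow_add hn0]; congr 1; rw [hs]; ring
    have e2 : Real.exp (lam * n) * Real.exp (-c * n) = Real.exp (-b * n) := by
      rw [← Real.exp_add]; congr 1; rw [hb]; ring
    calc Real.exp (lam * n) * (n : ℝ) ^ (-(d - 1)) * ((n:ℝ) ^ β * Real.exp (-c * n) * S)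
        = S * (((n:ℝ) ^ (-(d - 1)) * (n:ℝ) ^ β) * (Real.exp (lam * n) * Real.exp (-c * n))) := by
          ring
      _ = S * ((n:ℝ) ^ s * Real.exp (-b * (n:ℝ))) := by rw [e1, e2]
  have hT : Tendsto (fun n : ℕ => S * ((n:ℝ) ^ s * Real.exp (-b * (n:ℝ)))) atTop (nhds 0) := by
    have h0 := (tendsto_rpow_mul_exp_neg_mul_atTop_nhds_zero s b hb0).comp
      tendsto_natCast_atTop_atTop
    have := h0.const_mul S
    simpa using this
  refine squeeze_zero' ?_ ?_ hT
  · filter_upwards with n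
    exact mul_nonneg (mul_nonneg (Real.exp_pos _).le
      (Real.rpow_nonneg (Nat.cast_nonneg _) _)) (tsum_nonneg (hfnn n))
  · filter_upwards [eventually_ge_atTop 1] with n hn
    exact hbound n hn
end

section
/- Let 1 < α ≤ 2, λ > 0, d ∈ ℝ − ℤ_{<0}, and w(j) = j^{d-1}e^{-λj} for j ≥ 1. Then lim_{n→∞} e^{λn} n^{-(d-1)} ∑_{j=1}^∞ ( w(j)^α − |w(j) − w(j+n)|^α ) = α ∑_{j=1}^∞ e^{-λαj} j^{(d-1)(α-1)}. -/
open Filter Real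

/-!
Fix `m ≥ 1` and write `a = w(m)`, `b_n = w(m + n)`, `c_n = e^{λn} n^{1-d}`. Then
`c_n b_n = ((m + n) / n)^{d-1} e^{-λm} → e^{-λm}`, and since `x ↦ a^α - |a - x|^α` has
derivative `α a^{α-1}` at `0` while `b_n → 0`, the difference quotient
`(a^α - |a - b_n|^α) / b_n` tends to `α a^{α-1}`; the product of the two limits is the `m`-th
term of the claimed sum.

For the interchange of limit and sum, `|a^α - |a - b|^α| ≤ b (b^{α-1} + α a^{α-1})`, `w` is
bounded, and `1 ≤ (m + n) / n ≤ 2m`, so the `m`-th term is at most `C m^{|d-1|} e^{-λm}`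
uniformly in `n ≥ 1`; this is summable and dominated convergence for series applies.
-/

open Topology

namespace Real

theorem rpow_sub_rpow_sub_le {a b α : ℝ} (ha : 0 < a) (hba : b ≤ a) (hα : 1 ≤ α) :
    a ^ α - (a - b) ^ α ≤ α * b * a ^ (α - 1) := by
  have hba' : b / a ≤ 1 := div_le_one_of_le₀ hba ha.le
  have hbern := one_add_mul_self_le_rpow_one_add (neg_le_neg hba') hα
  have hscale : a ^ α * (1 + -(b / a)) ^ α = (a - b) ^ α := by
    rw [← mul_rpow ha.le (by linarith)]
    congr 1
    field_simp
    ring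
  have hlin : a ^ α * (1 + α * -(b / a)) = a ^ α - α * b * a ^ (α - 1) := by
    rw [rpow_sub_one ha.ne']
    field_simp
    ring
  have := mul_le_mul_of_nonneg_left hbern (rpow_nonneg ha.le α)
  rw [hscale, hlin] at this
  linarith

theorem abs_rpow_sub_abs_sub_rpow_le {a b α : ℝ} (ha : 0 < a) (hb : 0 ≤ b) (hα : 1 ≤ α) :
    |a ^ α - |a - b| ^ α| ≤ b ^ α + α * b * a ^ (α - 1) := by
  have hb0 : 0 ≤ b ^ α := rpow_nonneg hb α
  have hlin : 0 ≤ α * b * a ^ (α - 1) := by positivity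
  rcases le_or_gt b a with hba | hab
  · rw [abs_of_nonneg (sub_nonneg.mpr hba)]
    have hmono : (a - b) ^ α ≤ a ^ α := rpow_le_rpow (by linarith) (by linarith) (by linarith)
    rw [abs_of_nonneg (sub_nonneg.mpr hmono)]
    linarith [rpow_sub_rpow_sub_le ha hba hα]
  · rw [abs_of_neg (sub_neg.mpr hab), neg_sub, abs_le]
    have h1 : a ^ α ≤ b ^ α := rpow_le_rpow ha.le hab.le (by linarith)
    have h2 : (b - a) ^ α ≤ b ^ α := rpow_le_rpow (by linarith) (by linarith) (by linarith)
    have h3 : 0 ≤ a ^ α := rpow_nonneg ha.le α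
    have h4 : 0 ≤ (b - a) ^ α := rpow_nonneg (by linarith) α
    constructor <;> linarith

theorem hasDerivAt_rpow_sub_abs_sub_rpow {a : ℝ} (α : ℝ) (ha : 0 < a) :
    HasDerivAt (fun x => a ^ α - |a - x| ^ α) (α * a ^ (α - 1)) 0 := by
  have hpow : HasDerivAt (fun y : ℝ => y ^ α) (α * a ^ (α - 1)) (a - 0) := by
    simpa using hasDerivAt_rpow_const (p := α) (Or.inl ha.ne')
  have hsmooth : HasDerivAt (fun x : ℝ => a ^ α - (a - x) ^ α) (α * a ^ (α - 1)) 0 := by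
    simpa using (hpow.comp 0 ((hasDerivAt_id 0).const_sub a)).const_sub (a ^ α)
  refine hsmooth.congr_of_eventuallyEq ?_
  filter_upwards [gt_mem_nhds ha] with x hx
  rw [abs_of_pos (sub_pos.mpr hx)]

theorem tendsto_rpow_sub_abs_sub_rpow_div {ι : Type*} {l : Filter ι} {a : ℝ} (α : ℝ)
    (ha : 0 < a) {b : ι → ℝ} (hb : Tendsto b l (𝓝[≠] 0)) :
    Tendsto (fun i => (a ^ α - |a - b i| ^ α) / b i) l (𝓝 (α * a ^ (α - 1))) := by
  refine ((hasDerivAt_rpow_sub_abs_sub_rpow α ha).tendsto_slope_zero.comp hb).congr fun i => ?_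
  simp [abs_of_pos ha, div_eq_inv_mul]

theorem summable_rpow_mul_exp_neg_nat_mul (s : ℝ) {r : ℝ} (hr : 0 < r) :
    Summable fun n : ℕ => (n : ℝ) ^ s * exp (-r * n) := by
  refine (summable_pow_mul_exp_neg_nat_mul ⌈s⌉₊ hr).of_nonneg_of_le (fun n => by positivity)
    fun n => ?_
  gcongr
  rcases Nat.eq_zero_or_pos n with rfl | hn
  · rcases le_or_gt s 0 with hs | hs
    · simpa [Nat.ceil_eq_zero.mpr hs] using zero_rpow_le_one s
    · simp [zero_rpow hs.ne']
  · rw [← rpow_natCast]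
    exact rpow_le_rpow_of_exponent_le (by exact_mod_cast hn) (Nat.le_ceil s)

end Real

namespace temperedKernel

variable {d lam : ℝ}

theorem nonneg (m : ℕ) : 0 ≤ temperedKernel d lam m := by
  unfold temperedKernel; positivity

theorem pos {m : ℕ} (hm : 0 < m) : 0 < temperedKernel d lam m := by
  unfold temperedKernel; positivity

theorem rpow_eq (m : ℕ) (p : ℝ) :
    temperedKernel d lam m ^ p = (m : ℝ) ^ ((d - 1) * p) * exp (-lam * m * p) := by
  rw [temperedKernel, mul_rpow (by positivity) (exp_pos _).le, ← rpow_mul (Nat.cast_nonneg m),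
    ← exp_mul]

theorem tendsto_atTop_nhds_zero (hlam : 0 < lam) :
    Tendsto (temperedKernel d lam) atTop (𝓝 0) :=
  (tendsto_rpow_mul_exp_neg_mul_atTop_nhds_zero (d - 1) lam hlam).comp
    tendsto_natCast_atTop_atTop

theorem exp_mul_rpow_mul_add (m n : ℕ) :
    exp (lam * n) * (n : ℝ) ^ (-(d - 1)) * temperedKernel d lam (m + n) =
      (((m + n : ℕ) : ℝ) / n) ^ (d - 1) * exp (-lam * m) := by
  rw [div_eq_mul_inv, mul_rpow (Nat.cast_nonneg _) (by positivity), inv_rpow (Nat.cast_nonneg _),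
    ← rpow_neg (Nat.cast_nonneg _), temperedKernel]
  have hexp : exp (lam * n) * exp (-lam * ((m + n : ℕ) : ℝ)) = exp (-lam * m) := by
    rw [← exp_add]; push_cast; ring_nf
  linear_combination (((m + n : ℕ) : ℝ) ^ (d - 1) * (n : ℝ) ^ (-(d - 1))) * hexp

theorem tendsto_exp_mul_rpow_mul_add (m : ℕ) :
    Tendsto (fun n : ℕ => exp (lam * n) * (n : ℝ) ^ (-(d - 1)) * temperedKernel d lam (m + n))
      atTop (𝓝 (exp (-lam * m))) := by
  have hratio : Tendsto (fun n : ℕ => ((m + n : ℕ) : ℝ) / n) atTop (𝓝 1) := by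
    have := (tendsto_const_div_atTop_nhds_zero_nat (m : ℝ)).const_add 1
    rw [add_zero] at this
    refine this.congr' ?_
    filter_upwards [eventually_ne_atTop 0] with n hn
    field_simp
    push_cast
    ring
  have hpow := ((continuousAt_rpow_const 1 (d - 1) (Or.inl one_ne_zero)).tendsto.comp
    hratio).mul_const (exp (-lam * m))
  rw [one_rpow, one_mul] at hpow
  exact hpow.congr fun n => (exp_mul_rpow_mul_add m n).symm

theorem exp_mul_rpow_mul_add_le {m n : ℕ} (hm : 1 ≤ m) (hn : 1 ≤ n) :
    exp (lam * n) * (n : ℝ) ^ (-(d - 1)) * temperedKernel d lam (m + n) ≤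
      2 ^ |d - 1| * (m : ℝ) ^ |d - 1| * exp (-lam * m) := by
  have hn0 : (0 : ℝ) < n := by exact_mod_cast hn
  have hm1 : (1 : ℝ) ≤ m := by exact_mod_cast hm
  have hratio_ge : 1 ≤ ((m + n : ℕ) : ℝ) / n := by
    rw [le_div_iff₀ hn0]; push_cast; linarith
  have hratio_le : ((m + n : ℕ) : ℝ) / n ≤ 2 * m := by
    rw [div_le_iff₀ hn0]; push_cast; nlinarith [(by exact_mod_cast hn : (1 : ℝ) ≤ n)]
  rw [exp_mul_rpow_mul_add, ← mul_rpow zero_le_two (by positivity)]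
  gcongr
  calc (((m + n : ℕ) : ℝ) / n) ^ (d - 1) ≤ (((m + n : ℕ) : ℝ) / n) ^ |d - 1| :=
        rpow_le_rpow_of_exponent_le hratio_ge (le_abs_self _)
    _ ≤ (2 * m) ^ |d - 1| := by gcongr

theorem tendsto_exp_mul_rpow_mul_rpow_sub (α : ℝ) (hlam : 0 < lam) {m : ℕ} (hm : 0 < m) :
    Tendsto (fun n : ℕ => exp (lam * n) * (n : ℝ) ^ (-(d - 1)) *
        (temperedKernel d lam m ^ α -
          |temperedKernel d lam m - temperedKernel d lam (m + n)| ^ α))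
      atTop (𝓝 (α * (exp (-lam * α * m) * (m : ℝ) ^ ((d - 1) * (α - 1))))) := by
  have hb : Tendsto (fun n : ℕ => temperedKernel d lam (m + n)) atTop (𝓝[≠] 0) :=
    tendsto_nhdsWithin_of_tendsto_nhds_of_eventually_within _
      ((tendsto_atTop_nhds_zero hlam).comp
        (tendsto_atTop_mono (Nat.le_add_left · m) tendsto_id))
      (Eventually.of_forall fun n => (pos (by omega)).ne')
  have hlim := (tendsto_exp_mul_rpow_mul_add (d := d) (lam := lam) m).mul
    (tendsto_rpow_sub_abs_sub_rpow_div α (pos (d := d) (lam := lam) hm) hb)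
  have hvalue : exp (-lam * m) * (α * temperedKernel d lam m ^ (α - 1)) =
      α * (exp (-lam * α * m) * (m : ℝ) ^ ((d - 1) * (α - 1))) := by
    have hexp : exp (-lam * m) * exp (-lam * m * (α - 1)) = exp (-lam * α * m) := by
      rw [← exp_add]; ring_nf
    rw [rpow_eq, ← hexp]
    ring
  rw [hvalue] at hlim
  refine hlim.congr fun n => ?_
  have hb0 : temperedKernel d lam (m + n) ≠ 0 := (pos (by omega)).ne'
  field_simp

theorem abs_exp_mul_rpow_mul_rpow_sub_le {α W : ℝ} (hα : 1 ≤ α)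
    (hW : ∀ k, temperedKernel d lam k ≤ W) {m n : ℕ} (hm : 1 ≤ m) (hn : 1 ≤ n) :
    |exp (lam * n) * (n : ℝ) ^ (-(d - 1)) *
        (temperedKernel d lam m ^ α -
          |temperedKernel d lam m - temperedKernel d lam (m + n)| ^ α)|
      ≤ (1 + α) * W ^ (α - 1) * (2 ^ |d - 1| * (m : ℝ) ^ |d - 1| * exp (-lam * m)) := by
  set a := temperedKernel d lam m
  set b := temperedKernel d lam (m + n)
  set c := exp (lam * n) * (n : ℝ) ^ (-(d - 1))
  have hb : 0 < b := pos (by omega)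
  have hc : 0 ≤ c := by positivity
  have hpow_le : ∀ k, temperedKernel d lam k ^ (α - 1) ≤ W ^ (α - 1) := fun k =>
    rpow_le_rpow (nonneg k) (hW k) (by linarith)
  calc |c * (a ^ α - |a - b| ^ α)|
      ≤ c * (b ^ α + α * b * a ^ (α - 1)) := by
        rw [abs_mul, abs_of_nonneg hc]
        exact mul_le_mul_of_nonneg_left (abs_rpow_sub_abs_sub_rpow_le (pos hm) hb.le hα) hc
    _ = (b ^ (α - 1) + α * a ^ (α - 1)) * (c * b) := by
        rw [rpow_sub_one hb.ne']
        field_simp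
    _ ≤ (1 + α) * W ^ (α - 1) * (2 ^ |d - 1| * (m : ℝ) ^ |d - 1| * exp (-lam * m)) := by
        have hsum : b ^ (α - 1) + α * a ^ (α - 1) ≤ (1 + α) * W ^ (α - 1) := by
          nlinarith [hpow_le (m + n), hpow_le m]
        have hsum_nonneg : 0 ≤ b ^ (α - 1) + α * a ^ (α - 1) :=
          add_nonneg (rpow_nonneg hb.le _) (mul_nonneg (by linarith) (rpow_nonneg (nonneg m) _))
        exact mul_le_mul hsum (exp_mul_rpow_mul_add_le hm hn) (mul_nonneg hc hb.le)
          (hsum_nonneg.trans hsum)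

end temperedKernel

theorem difference_sum_asymptotics_alpha_gt_one_general (α lam d : ℝ)
    (hα1 : 1 < α) (hlam : 0 < lam) :
    Tendsto (fun n : ℕ =>
        Real.exp (lam * n) * (n : ℝ) ^ (-(d - 1)) *
          ∑' j : ℕ,
            ((temperedKernel d lam (j + 1)) ^ α -
              |temperedKernel d lam (j + 1) - temperedKernel d lam (j + 1 + n)| ^ α))
      atTop
      (nhds (α * ∑' j : ℕ,
        Real.exp (-lam * α * ((j : ℝ) + 1)) * ((j : ℝ) + 1) ^ ((d - 1) * (α - 1)))) := by
  obtain ⟨W, hW⟩ := (temperedKernel.tendsto_atTop_nhds_zero (d := d) hlam).bddAbove_range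
  have hdom : Summable fun j : ℕ =>
      (1 + α) * W ^ (α - 1) *
        (2 ^ |d - 1| * ((j + 1 : ℕ) : ℝ) ^ |d - 1| * exp (-lam * (j + 1 : ℕ))) :=
    (((summable_nat_add_iff 1).mpr (summable_rpow_mul_exp_neg_nat_mul |d - 1| hlam)).mul_left
      (2 ^ |d - 1|)).mul_left ((1 + α) * W ^ (α - 1)) |>.congr fun j => by ring
  rw [← tsum_mul_left]
  refine (tendsto_tsum_of_dominated_convergence hdom (fun j => ?_) ?_).congr
    fun n => tsum_mul_left
  · simpa only [Nat.cast_add_one] using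
      temperedKernel.tendsto_exp_mul_rpow_mul_rpow_sub α hlam j.succ_pos
  · filter_upwards [eventually_ge_atTop 1] with n hn j
    exact temperedKernel.abs_exp_mul_rpow_mul_rpow_sub_le hα1.le (fun k => hW ⟨k, rfl⟩)
      (Nat.le_add_left 1 j) hn

theorem difference_sum_asymptotics_alpha_gt_one (α lam d : ℝ)
    (hα1 : 1 < α) (hα2 : α ≤ 2) (hlam : 0 < lam)
    (hd : ∀ n : ℕ, d ≠ -((n : ℝ) + 1)) :
    Tendsto (fun n : ℕ =>
        Real.exp (lam * n) * (n : ℝ) ^ (-(d - 1)) *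
          ∑' j : ℕ,
            ((temperedKernel d lam (j + 1)) ^ α -
              |temperedKernel d lam (j + 1) - temperedKernel d lam (j + 1 + n)| ^ α))
      atTop
      (nhds (α * ∑' j : ℕ,
        Real.exp (-lam * α * ((j : ℝ) + 1)) * ((j : ℝ) + 1) ^ ((d - 1) * (α - 1)))) :=
  difference_sum_asymptotics_alpha_gt_one_general α lam d hα1 hlam
end

section
/- Let λ > 0, d ∈ ℝ − ℤ_{<0}, α ∈ (0,2), and let τ_{d,λ}(n) be the co-difference of the stable ARTFIMA(0,d,λ,0) model with SαS innovations. Then ∑_{n=0}^∞ |τ_{d,λ}(n)| < ∞; i.e. the stable ARTFIMA model does not have long memory in the co-difference sense. -/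
open Filter Real

/-- Co-difference of the ARTFIMA(0,d,λ,0) series with SαS innovations. -/
noncomputable def codifference (d lam α : ℝ) (n : ℕ) : ℝ :=
  ∑' j : ℕ,
    (|omegaCoeff d lam j| ^ α + |omegaCoeff d lam (j + n)| ^ α -
      |omegaCoeff d lam j - omegaCoeff d lam (j + n)| ^ α)

lemma rpow_add_le_add_rpow_real {x y p : ℝ} (hx : 0 ≤ x) (hy : 0 ≤ y)
    (hp : 0 ≤ p) (hp1 : p ≤ 1) : (x + y) ^ p ≤ x ^ p + y ^ p := by
  have h := NNReal.rpow_add_le_add_rpow x.toNNReal y.toNNReal hp hp1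
  have h2 := NNReal.coe_le_coe.mpr h
  push_cast at h2
  rwa [Real.coe_toNNReal x hx, Real.coe_toNNReal y hy] at h2

lemma holder_rpow {p : ℝ} (hp0 : 0 ≤ p) (hp1 : p ≤ 1) {u v : ℝ} (hu : 0 ≤ u) (hv : 0 ≤ v) :
    |u ^ p - v ^ p| ≤ |u - v| ^ p := by
  have main : ∀ a b : ℝ, 0 ≤ a → 0 ≤ b → b ≤ a → |a ^ p - b ^ p| ≤ |a - b| ^ p := by
    intro a b ha hb hba
    have h1 : a ^ p ≤ (a - b) ^ p + b ^ p := by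
      have := rpow_add_le_add_rpow_real (sub_nonneg.2 hba) hb hp0 hp1
      simpa [sub_add_cancel] using this
    have h2 : b ^ p ≤ a ^ p := Real.rpow_le_rpow hb hba hp0
    rw [abs_of_nonneg (sub_nonneg.2 h2), abs_of_nonneg (sub_nonneg.2 hba)]
    linarith
  rcases le_total v u with h | h
  · exact main u v hu hv h
  · rw [abs_sub_comm, abs_sub_comm u v]; exact main v u hv hu h

lemma lip_rpow {α M : ℝ} (h1 : 1 < α) (h2 : α < 2) (hM : 1 ≤ M) {u v : ℝ}
    (hu : 0 ≤ u) (hv : 0 ≤ v) (huM : u ≤ M) (hvM : v ≤ M) :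
    |u ^ α - v ^ α| ≤ 2 * M * |u - v| ^ (α - 1) := by
  have hM0 : (0:ℝ) < M := lt_of_lt_of_le one_pos hM
  have main : ∀ a b : ℝ, 0 ≤ a → 0 ≤ b → b ≤ a → a ≤ M →
      |a ^ α - b ^ α| ≤ 2 * M * |a - b| ^ (α - 1) := by
    intro a b ha hb hba haM
    have hbM : b ≤ M := le_trans hba haM
    have hab0 : 0 ≤ a - b := sub_nonneg.2 hba
    have habM : a - b ≤ M := by linarith
    have hne : (α - 1) + 1 ≠ 0 := by intro hc; linarith
    have hsplit : a ^ α = a ^ (α - 1) * a := by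
      nth_rewrite 1 [show α = (α - 1) + 1 by ring]
      rw [Real.rpow_add' ha hne, Real.rpow_one]
    have hsplitb : b ^ α = b ^ (α - 1) * b := by
      nth_rewrite 1 [show α = (α - 1) + 1 by ring]
      rw [Real.rpow_add' hb hne, Real.rpow_one]
    -- a^α - b^α = a^(α-1)*(a-b) + b*(a^(α-1) - b^(α-1))
    have hdiff : a ^ α - b ^ α = a ^ (α - 1) * (a - b) + b * (a ^ (α - 1) - b ^ (α - 1)) := by
      rw [hsplit, hsplitb]; ring
    have hmono : b ^ (α - 1) ≤ a ^ (α - 1) := Real.rpow_le_rpow hb hba (by linarith)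
    have hhold : a ^ (α - 1) - b ^ (α - 1) ≤ (a - b) ^ (α - 1) := by
      have := holder_rpow (by linarith : (0:ℝ) ≤ α - 1) (by linarith) ha hb
      rw [abs_of_nonneg (sub_nonneg.2 hmono), abs_of_nonneg hab0] at this
      exact this
    -- (a-b) ≤ M^(2-α) * (a-b)^(α-1)
    have hsub : a - b ≤ M ^ (2 - α) * (a - b) ^ (α - 1) := by
      have e1 : a - b = (a - b) ^ (α - 1) * (a - b) ^ (2 - α) := by
        rw [← Real.rpow_add' hab0 (by norm_num : (α - 1) + (2 - α) ≠ 0),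
          show (α - 1) + (2 - α) = (1:ℝ) by ring, Real.rpow_one]
      have e2 : (a - b) ^ (2 - α) ≤ M ^ (2 - α) :=
        Real.rpow_le_rpow hab0 habM (by linarith)
      calc a - b = (a - b) ^ (α - 1) * (a - b) ^ (2 - α) := e1
        _ ≤ (a - b) ^ (α - 1) * M ^ (2 - α) := by
            exact mul_le_mul_of_nonneg_left e2 (Real.rpow_nonneg hab0 _)
        _ = M ^ (2 - α) * (a - b) ^ (α - 1) := by ring
    have hMsplit : M ^ (α - 1) * M ^ (2 - α) = M := by
      rw [← Real.rpow_add hM0, show (α - 1) + (2 - α) = (1:ℝ) by ring, Real.rpow_one]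
    have haα1 : a ^ (α - 1) ≤ M ^ (α - 1) := Real.rpow_le_rpow ha haM (by linarith)
    have t1 : a ^ (α - 1) * (a - b) ≤ M * (a - b) ^ (α - 1) := by
      calc a ^ (α - 1) * (a - b) ≤ M ^ (α - 1) * (a - b) :=
            mul_le_mul_of_nonneg_right haα1 hab0
        _ ≤ M ^ (α - 1) * (M ^ (2 - α) * (a - b) ^ (α - 1)) := by
            exact mul_le_mul_of_nonneg_left hsub (Real.rpow_nonneg hM0.le _)
        _ = M ^ (α - 1) * M ^ (2 - α) * (a - b) ^ (α - 1) := by ring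
        _ = M * (a - b) ^ (α - 1) := by rw [hMsplit]
    have t2 : b * (a ^ (α - 1) - b ^ (α - 1)) ≤ M * (a - b) ^ (α - 1) := by
      calc b * (a ^ (α - 1) - b ^ (α - 1)) ≤ M * (a ^ (α - 1) - b ^ (α - 1)) :=
            mul_le_mul_of_nonneg_right hbM (sub_nonneg.2 hmono) |>.trans_eq rfl
        _ ≤ M * (a - b) ^ (α - 1) := mul_le_mul_of_nonneg_left hhold hM0.le
    have habs : a ^ α - b ^ α ≥ 0 := sub_nonneg.2 (Real.rpow_le_rpow hb hba (by linarith))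
    rw [abs_of_nonneg habs, abs_of_nonneg hab0, hdiff]
    linarith
  rcases le_total v u with h | h
  · exact main u v hu hv h huM
  · rw [abs_sub_comm, abs_sub_comm u v]; exact main v u hv hu h hvM

lemma key_rpow {α M : ℝ} (hα0 : 0 < α) (hα2 : α < 2) (hM : 1 ≤ M) :
    ∃ β L : ℝ, 0 < β ∧ β ≤ α ∧ 0 ≤ L ∧
      ∀ u v : ℝ, 0 ≤ u → 0 ≤ v → u ≤ M → v ≤ M → |u ^ α - v ^ α| ≤ L * |u - v| ^ β := by
  rcases le_or_gt α 1 with h | h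
  · exact ⟨α, 1, hα0, le_refl _, zero_le_one, fun u v hu hv _ _ => by
      simpa using holder_rpow hα0.le h hu hv⟩
  · exact ⟨α - 1, 2 * M, by linarith, by linarith, by positivity,
      fun u v hu hv huM hvM => lip_rpow h hα2 hM hu hv huM hvM⟩

lemma omega_bound (d lam : ℝ) (hlam : 0 < lam) (hd : ∀ n : ℕ, d ≠ -((n : ℝ) + 1)) :
    ∃ M : ℝ, 1 ≤ M ∧ ∀ k : ℕ, |omegaCoeff d lam k| ≤ M * Real.exp (-(lam / 2) * k) := by
  by_cases hd0 : d = 0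
  · refine ⟨1, le_refl _, fun k => ?_⟩
    simp [omegaCoeff, hd0, Real.Gamma_zero, Real.exp_nonneg]
  · -- d is not zero and not a negative integer
    have hdm : ∀ m : ℕ, d ≠ -(m : ℝ) := by
      intro m
      cases m with
      | zero => simpa using hd0
      | succ n => simpa [Nat.cast_succ] using hd n
    have hΓd : Real.Gamma d ≠ 0 := Real.Gamma_ne_zero hdm
    have hkd : ∀ k : ℕ, (k : ℝ) + d ≠ 0 := by
      intro k hk
      have : d = -(k : ℝ) := by linarith
      exact hdm k this
    set ε := lam / 2 with hε_def
    have hε : 0 < ε := by positivity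
    set g : ℕ → ℝ := fun k => Real.Gamma (k + d) / Real.Gamma (k + 1) with hg_def
    have hΓk : ∀ k : ℕ, (0:ℝ) < Real.Gamma ((k : ℝ) + 1) := fun k =>
      Real.Gamma_pos_of_pos (by positivity)
    have hg : ∀ k : ℕ, g (k + 1) = g k * (((k : ℝ) + d) / ((k : ℝ) + 1)) := by
      intro k
      have h1 : Real.Gamma (((k : ℕ) + 1 : ℕ) + d) = ((k : ℝ) + d) * Real.Gamma ((k : ℝ) + d) := by
        push_cast
        rw [show (k : ℝ) + 1 + d = ((k : ℝ) + d) + 1 by ring, Real.Gamma_add_one (hkd k)]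
      have h2 : Real.Gamma ((((k : ℕ) + 1 : ℕ) : ℝ) + 1) = ((k : ℝ) + 1) * Real.Gamma ((k : ℝ) + 1) := by
        push_cast
        rw [show (k : ℝ) + 1 + 1 = ((k : ℝ) + 1) + 1 by ring,
          Real.Gamma_add_one (by positivity : (k : ℝ) + 1 ≠ 0)]
      simp only [hg_def]
      push_cast
      push_cast at h1 h2
      rw [h1, h2, mul_comm ((k:ℝ) + d) _, mul_comm ((k:ℝ) + 1) _, mul_div_mul_comm]
    set h : ℕ → ℝ := fun k => |g k| * Real.exp (-ε * k) with hh_def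
    set N : ℕ := ⌈|d| / ε⌉₊ with hN_def
    have hdN : |d| ≤ ε * N := by
      rcases le_or_gt (|d| / ε) N with hle | hlt
      · calc |d| = ε * (|d| / ε) := by field_simp
          _ ≤ ε * N := mul_le_mul_of_nonneg_left hle hε.le
      · exact absurd (Nat.le_ceil _) (not_le.2 hlt)
    -- decreasing step for k ≥ N
    have hstep : ∀ k : ℕ, N ≤ k → h (k + 1) ≤ h k := by
      intro k hk
      have hk1 : (0:ℝ) < (k : ℝ) + 1 := by positivity
      have hratio : |(((k : ℝ) + d) / ((k : ℝ) + 1))| ≤ Real.exp ε := by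
        rw [abs_div, abs_of_pos hk1]
        rw [div_le_iff₀ hk1]
        have : |(k:ℝ) + d| ≤ (k:ℝ) + |d| := by
          calc |(k:ℝ) + d| ≤ |(k:ℝ)| + |d| := abs_add_le _ _
            _ = (k:ℝ) + |d| := by rw [abs_of_nonneg (Nat.cast_nonneg k)]
        have hNk : (N:ℝ) ≤ (k:ℝ) := Nat.cast_le.2 hk
        have h1ε : |(k:ℝ) + d| ≤ (1 + ε) * ((k:ℝ) + 1) := by
          have : |d| ≤ ε * ((k:ℝ) + 1) := by nlinarith
          nlinarith [abs_nonneg ((k:ℝ) + d)]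
        calc |(k:ℝ) + d| ≤ (1 + ε) * ((k:ℝ) + 1) := h1ε
          _ ≤ Real.exp ε * ((k:ℝ) + 1) := by
              have := Real.add_one_le_exp ε
              nlinarith
      calc h (k + 1) = |g k| * |(((k : ℝ) + d) / ((k : ℝ) + 1))| * Real.exp (-ε * (k + 1)) := by
            simp only [hh_def, hg _, abs_mul]
            push_cast
            ring_nf
        _ ≤ |g k| * Real.exp ε * Real.exp (-ε * (k + 1)) := by
            apply mul_le_mul_of_nonneg_right _ (Real.exp_nonneg _)
            exact mul_le_mul_of_nonneg_left hratio (abs_nonneg _)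
        _ = h k := by
            simp only [hh_def]
            rw [mul_assoc, ← Real.exp_add]
            ring_nf
    -- uniform bound on h
    obtain ⟨C, hC⟩ : ∃ C : ℝ, ∀ k : ℕ, h k ≤ C := by
      refine ⟨(Finset.range (N + 1)).sup' ⟨0, by simp⟩ h, fun k => ?_⟩
      rcases le_or_gt k N with hkN | hNk
      · exact Finset.le_sup' h (Finset.mem_range.2 (Nat.lt_succ_of_le hkN))
      · have hbase : h N ≤ (Finset.range (N + 1)).sup' ⟨0, by simp⟩ h :=
          Finset.le_sup' h (Finset.mem_range.2 (Nat.lt_succ_self N))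
        have : ∀ m : ℕ, h (N + m) ≤ h N := by
          intro m
          induction m with
          | zero => simp
          | succ n ih => exact le_trans (hstep (N + n) (Nat.le_add_right N n)) ih
        calc h k = h (N + (k - N)) := by rw [Nat.add_sub_cancel' hNk.le]
          _ ≤ h N := this _
          _ ≤ _ := hbase
    refine ⟨max (C / |Real.Gamma d|) 1, le_max_right _ _, fun k => ?_⟩
    have hωeq : |omegaCoeff d lam k| = (|g k| / |Real.Gamma d|) * Real.exp (-lam * k) := by
      have heq : omegaCoeff d lam k = (g k / Real.Gamma d) * Real.exp (-lam * k) := by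
        simp only [omegaCoeff, hg_def, div_mul_eq_div_div_swap]
      rw [heq, abs_mul, Real.abs_exp, abs_div]
    have hexp : Real.exp (-lam * k) = Real.exp (-ε * k) * Real.exp (-ε * k) := by
      rw [← Real.exp_add]
      congr 1
      rw [hε_def]; ring
    have hhk : |g k| * Real.exp (-ε * k) ≤ C := hC k
    calc |omegaCoeff d lam k| = (|g k| * Real.exp (-ε * k)) / |Real.Gamma d| * Real.exp (-ε * k) := by
          rw [hωeq, hexp]; ring
      _ ≤ C / |Real.Gamma d| * Real.exp (-ε * k) := by
          have habs : 0 < |Real.Gamma d| := abs_pos.2 hΓd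
          gcongr
      _ ≤ max (C / |Real.Gamma d|) 1 * Real.exp (-ε * k) :=
          mul_le_mul_of_nonneg_right (le_max_left _ _) (Real.exp_nonneg _)

/-- The stable ARTFIMA(0,d,λ,0) model does not have long memory:
its co-difference is absolutely summable. -/
theorem codifference_summable (α lam d : ℝ) (hα0 : 0 < α) (hα2 : α < 2)
    (hlam : 0 < lam) (hd : ∀ n : ℕ, d ≠ -((n : ℝ) + 1)) :
    Summable (fun n : ℕ => |codifference d lam α n|) := by
  obtain ⟨M, hM1, hMb⟩ := omega_bound d lam hlam hd
  have hM0 : (0:ℝ) < M := lt_of_lt_of_le one_pos hM1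
  have h2M : (1:ℝ) ≤ 2 * M := by linarith
  obtain ⟨β, L, hβ0, hβα, hL0, hkey⟩ := key_rpow hα0 hα2 h2M
  set ε : ℝ := lam / 2 with hε_def
  have hε : 0 < ε := by positivity
  set c : ℝ := ε * β with hc_def
  have hc : 0 < c := by positivity
  set K : ℝ := ((2 * M) ^ (α - β) + L) * M ^ β with hK_def
  have hK0 : 0 ≤ K := by
    apply mul_nonneg
    · exact add_nonneg (Real.rpow_nonneg (by linarith) _) hL0
    · exact Real.rpow_nonneg hM0.le _
  -- ω is bounded by M
  have hMabs : ∀ k : ℕ, |omegaCoeff d lam k| ≤ M := by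
    intro k
    calc |omegaCoeff d lam k| ≤ M * Real.exp (-ε * k) := hMb k
      _ ≤ M * 1 := by
          apply mul_le_mul_of_nonneg_left _ hM0.le
          have hnn : (0:ℝ) ≤ ε * k := mul_nonneg hε.le (Nat.cast_nonneg k)
          exact Real.exp_le_one_iff.2 (by linarith)
      _ = M := mul_one M
  -- termwise bound
  set F : ℕ → ℕ → ℝ := fun n j =>
    |omegaCoeff d lam j| ^ α + |omegaCoeff d lam (j + n)| ^ α -
      |omegaCoeff d lam j - omegaCoeff d lam (j + n)| ^ α with hF_def
  have hFbound : ∀ n j : ℕ, |F n j| ≤ K * Real.exp (-c * (j + n)) := by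
    intro n j
    set a := omegaCoeff d lam j with ha_def
    set b := omegaCoeff d lam (j + n) with hb_def
    have hb : |b| ≤ M * Real.exp (-ε * (j + n)) := by
      have := hMb (j + n); push_cast at this ⊢; exact this
    have haM : |a| ≤ 2 * M := le_trans (hMabs j) (by linarith)
    have hbM : |b| ≤ M := hMabs (j + n)
    have hbM2 : |b| ≤ 2 * M := le_trans hbM (by linarith)
    have habM : |a - b| ≤ 2 * M := by
      calc |a - b| ≤ |a| + |b| := abs_sub _ _
        _ ≤ 2 * M := by linarith [hMabs j]
    have h1 : |F n j| ≤ |b| ^ α + |(|a| ^ α - |a - b| ^ α)| := by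
      have : F n j = |b| ^ α + (|a| ^ α - |a - b| ^ α) := by simp only [hF_def]; ring
      rw [this]
      calc |(|b| ^ α + (|a| ^ α - |a - b| ^ α))| ≤ |(|b| ^ α)| + |(|a| ^ α - |a - b| ^ α)| :=
            abs_add_le _ _
        _ = |b| ^ α + |(|a| ^ α - |a - b| ^ α)| := by
            rw [abs_of_nonneg (Real.rpow_nonneg (abs_nonneg b) α)]
    have h2 : |(|a| ^ α - |a - b| ^ α)| ≤ L * |b| ^ β := by
      have hk := hkey |a| |a - b| (abs_nonneg a) (abs_nonneg (a - b)) haM habM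
      have h3 : |(|a| - |a - b|)| ≤ |b| := by
        have := abs_abs_sub_abs_le_abs_sub a (a - b)
        simpa using this
      calc |(|a| ^ α - |a - b| ^ α)| ≤ L * |(|a| - |a - b|)| ^ β := hk
        _ ≤ L * |b| ^ β :=
            mul_le_mul_of_nonneg_left (Real.rpow_le_rpow (abs_nonneg _) h3 hβ0.le) hL0
    have h4 : |b| ^ α ≤ (2 * M) ^ (α - β) * |b| ^ β := by
      have hαne : β + (α - β) ≠ 0 := by
        intro hcon
        have : α = 0 := by linarith
        exact absurd this (ne_of_gt hα0)
      nth_rewrite 1 [show α = β + (α - β) by ring]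
      rw [Real.rpow_add' (abs_nonneg b) hαne]
      rw [mul_comm]
      exact mul_le_mul_of_nonneg_right
        (Real.rpow_le_rpow (abs_nonneg b) hbM2 (by linarith)) (Real.rpow_nonneg (abs_nonneg b) β)
    have h5 : |b| ^ β ≤ M ^ β * Real.exp (-c * (j + n)) := by
      calc |b| ^ β ≤ (M * Real.exp (-ε * (j + n))) ^ β :=
            Real.rpow_le_rpow (abs_nonneg b) hb hβ0.le
        _ = M ^ β * (Real.exp (-ε * (j + n))) ^ β :=
            Real.mul_rpow hM0.le (Real.exp_nonneg _)
        _ = M ^ β * Real.exp (-c * (j + n)) := by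
            rw [← Real.exp_mul]
            congr 1
            rw [hc_def]; ring
    calc |F n j| ≤ |b| ^ α + |(|a| ^ α - |a - b| ^ α)| := h1
      _ ≤ (2 * M) ^ (α - β) * |b| ^ β + L * |b| ^ β := add_le_add h4 h2
      _ = ((2 * M) ^ (α - β) + L) * |b| ^ β := by ring
      _ ≤ ((2 * M) ^ (α - β) + L) * (M ^ β * Real.exp (-c * (j + n))) := by
          apply mul_le_mul_of_nonneg_left h5
          exact add_nonneg (Real.rpow_nonneg (by linarith) _) hL0
      _ = K * Real.exp (-c * (j + n)) := by rw [hK_def]; ring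
  -- geometric machinery
  set r : ℝ := Real.exp (-c) with hr_def
  have hr0 : 0 ≤ r := Real.exp_nonneg _
  have hr1 : r < 1 := Real.exp_lt_one_iff.2 (by linarith)
  have hBeq : ∀ n j : ℕ, K * Real.exp (-c * (j + n)) = (K * Real.exp (-c * n)) * r ^ j := by
    intro n j
    rw [hr_def, ← Real.exp_nat_mul, mul_assoc K, ← Real.exp_add]
    congr 1
    push_cast
    ring
  have hgeom : ∀ n : ℕ, Summable (fun j : ℕ => (K * Real.exp (-c * n)) * r ^ j) :=
    fun n => (summable_geometric_of_lt_one hr0 hr1).mul_left _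
  have hFsum : ∀ n : ℕ, Summable (fun j => |F n j|) := by
    intro n
    apply Summable.of_nonneg_of_le (fun j => abs_nonneg _) (fun j => ?_) (hgeom n)
    rw [← hBeq n j]; exact hFbound n j
  have hcodif : ∀ n : ℕ, |codifference d lam α n| ≤ (K * Real.exp (-c * n)) * (1 - r)⁻¹ := by
    intro n
    have heq : codifference d lam α n = ∑' j, F n j := rfl
    have habs : |∑' j, F n j| ≤ ∑' j, |F n j| := by
      have := norm_tsum_le_tsum_norm (f := F n) (by simpa [Real.norm_eq_abs] using hFsum n)
      simpa [Real.norm_eq_abs] using this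
    have hle : ∑' j, |F n j| ≤ ∑' j, (K * Real.exp (-c * n)) * r ^ j := by
      apply Summable.tsum_le_tsum _ (hFsum n) (hgeom n)
      intro j
      rw [← hBeq n j]; exact hFbound n j
    have hval : ∑' j : ℕ, (K * Real.exp (-c * n)) * r ^ j = (K * Real.exp (-c * n)) * (1 - r)⁻¹ := by
      rw [tsum_mul_left, tsum_geometric_of_lt_one hr0 hr1]
    rw [heq]
    calc |∑' j, F n j| ≤ ∑' j, |F n j| := habs
      _ ≤ ∑' j, (K * Real.exp (-c * n)) * r ^ j := hle
      _ = (K * Real.exp (-c * n)) * (1 - r)⁻¹ := hval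
  apply Summable.of_nonneg_of_le (fun n => abs_nonneg _) (fun n => ?_)
    ((summable_geometric_of_lt_one hr0 hr1).mul_left (K * (1 - r)⁻¹))
  calc |codifference d lam α n| ≤ (K * Real.exp (-c * n)) * (1 - r)⁻¹ := hcodif n
    _ = K * (1 - r)⁻¹ * r ^ n := by
        rw [hr_def, ← Real.exp_nat_mul]
        ring_nf
end
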